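/- (Optimal Path Extension, swap form.) Let P ++ [y] ++ [x] ++ M be a duplicate-free list enumerating all variables, let U be the set of elements of the prefix P, and suppose U is a superset of an optimal parents set of x, i.e. d(x, U) = d(x, univ \ {x}). Then Q(P ++ [x] ++ [y] ++ M) ≤ Q(P ++ [y] ++ [x] ++ M): exchanging x and y so that x immediately follows P does not increase the total score of the ordering. -/

import Mathlib

/-!
Only the terms of `x` and `y` change under the swap. Moving `y` in front of `x` can only
improve `y`'s term, since `y` may then also choose `x` as a parent. Moving `y` behind `x` does
not worsen `x`'s term: `P ⊆ P ∪ {y} ⊆ univ \ {x}`, and `d s x` is antitone and takes the same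
value at both ends of this chain.
-/

/-- `d s x U` : the score of selecting optimal parents of `x` from `U`,
defined as the minimum of `s x W` over all subsets `W ⊆ U`. -/
noncomputable def d {X : Type*} [DecidableEq X] (s : X → Finset X → ℝ)
    (x : X) (U : Finset X) : ℝ :=
  U.powerset.inf' (Finset.powerset_nonempty U) (s x)

/-- `Qfrom s M U` : the cost of extending the lattice node `U` along the
ordering `M`, i.e. `Σ_k d(M_k, U ∪ S_k)` where `S_k` is the set of entries
of `M` preceding position `k`. -/
noncomputable def Qfrom {X : Type*} [DecidableEq X] (s : X → Finset X → ℝ) :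
    List X → Finset X → ℝ
  | [], _ => 0
  | x :: M, U => d s x U + Qfrom s M (insert x U)

/-- `Q s L` : the cost of the ordering `L`, i.e. `Σ_k d(L_k, S_k)` where
`S_k` is the set of entries of `L` preceding position `k`; this is the score
of the network in which each variable's parents are chosen optimally from
its predecessors in `L`. -/
noncomputable def Q {X : Type*} [DecidableEq X] (s : X → Finset X → ℝ)
    (L : List X) : ℝ :=
  Qfrom s L ∅

section

variable {X : Type*} [DecidableEq X] (s : X → Finset X → ℝ)

lemma d_antitone (x : X) : Antitone (d s x) := fun _ _ h =>
  Finset.inf'_mono (s x) (Finset.powerset_mono.mpr h) _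

lemma d_eq_of_subset_of_subset (x : X) {U V W : Finset X} (hUV : U ⊆ V) (hVW : V ⊆ W)
    (h : d s x U = d s x W) : d s x V = d s x U :=
  le_antisymm (d_antitone s x hUV) (h ▸ d_antitone s x hVW)

lemma Qfrom_append (A B : List X) (U : Finset X) :
    Qfrom s (A ++ B) U = Qfrom s A U + Qfrom s B (U ∪ A.toFinset) := by
  induction A generalizing U with
  | nil => simp [Qfrom]
  | cons a A ih =>
    rw [List.cons_append, Qfrom, Qfrom, ih, add_assoc, List.toFinset_cons,
      Finset.insert_union, Finset.union_insert]

lemma Qfrom_swap_le {x y : X} (M : List X) {U : Finset X}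
    (hx : d s x (insert y U) = d s x U) :
    Qfrom s (x :: y :: M) U ≤ Qfrom s (y :: x :: M) U := by
  have hy : d s y (insert x U) ≤ d s y U := d_antitone s y (Finset.subset_insert x U)
  simp only [Qfrom, Finset.insert_comm x y]
  linarith

lemma Q_swap_le (P M : List X) {x y : X}
    (hx : d s x (insert y P.toFinset) = d s x P.toFinset) :
    Q s (P ++ [x] ++ [y] ++ M) ≤ Q s (P ++ [y] ++ [x] ++ M) := by
  have hsplit (a b : X) :
      Q s (P ++ [a] ++ [b] ++ M) = Qfrom s P ∅ + Qfrom s (a :: b :: M) P.toFinset := by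
    simpa [Q] using Qfrom_append s P (a :: b :: M) ∅
  rw [hsplit, hsplit]
  exact add_le_add_right (Qfrom_swap_le s M hx) _

end

theorem optimal_path_extension_swap_general
    {X : Type*} [Fintype X] [DecidableEq X]
    (s : X → Finset X → ℝ) (P M : List X) (x y : X)
    (hx : x ∉ P.toFinset)
    (hopt : d s x P.toFinset = d s x (Finset.univ \ {x})) :
    Q s (P ++ [x] ++ [y] ++ M) ≤ Q s (P ++ [y] ++ [x] ++ M) := by
  obtain rfl | hxy := eq_or_ne x y
  · exact le_rfl
  have hsub : insert y P.toFinset ⊆ Finset.univ \ {x} := by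
    rw [Finset.insert_subset_iff]
    exact ⟨by simpa using hxy.symm, fun z hz => by
      simpa using fun hzx : z = x => hx (hzx ▸ hz)⟩
  exact Q_swap_le s P M (d_eq_of_subset_of_subset s x (Finset.subset_insert y _) hsub hopt)

/-- Optimal path extension, swap form: if the prefix set `U = P.toFinset` is
a superset of an optimal parents set of `x`, then exchanging `x` and `y` so
that `x` immediately follows `P` does not increase the total score. -/
theorem optimal_path_extension_swap
    {X : Type*} [Fintype X] [DecidableEq X] [Nonempty X]
    (s : X → Finset X → ℝ) (P M : List X) (x y : X)
    (hnodup : (P ++ [y] ++ [x] ++ M).Nodup)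
    (henum : ∀ z : X, z ∈ P ++ [y] ++ [x] ++ M)
    (hx : x ∉ P.toFinset)
    (hopt : d s x P.toFinset = d s x (Finset.univ \ {x})) :
    Q s (P ++ [x] ++ [y] ++ M) ≤ Q s (P ++ [y] ++ [x] ++ M) :=
  optimal_path_extension_swap_general s P M x y hx hopt
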